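/- The limit as s → 1 of −ψ'(1−s) + (π²/4)·sec²(πs/2) equals −π²/12. -/

import Mathlib

/-!
Differentiating the Euler limit `log Γ(x) = lim (x log n + log n! - ∑_{m ≤ n} log (x + m))`
termwise, twice, gives `ψ'(x) = ∑_{k ≥ 0} (x + k)⁻²` for `x > 0`, and `Γ(x + 1) = x Γ(x)` turns
this into `ψ'(x) = x⁻² + ∑_{k ≥ 0} (x + 1 + k)⁻²` on `(-1, ∞) \ {0}`. Near `s = 1` the double pole
`(1 - s)⁻²` of `ψ'(1 - s)` cancels against that of `(π²/4) sec²(πs/2) = (π²/4) / sin²(π(s - 1)/2)`,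
whose regular part tends to `π²/12` because `1/sin² v - 1/v² → 1/3`; what is left of `ψ'(1 - s)`
tends to `∑_{k ≥ 0} (1 + k)⁻² = ζ(2) = π²/6`.
-/

open Filter Topology

/-- The digamma function `ψ = (log ∘ Γ)'`. -/
noncomputable def digamma (x : ℝ) : ℝ := deriv (fun t => Real.log (Real.Gamma t)) x

open Real Set

lemma summable_inv_add_nat_sq (a : ℝ) : Summable fun k : ℕ => ((a + k) ^ 2)⁻¹ :=
  ((summable_one_div_nat_add_rpow a 2).mpr one_lt_two).congr fun k => by
    rw [rpow_two, sq_abs, one_div, add_comm]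

lemma tsum_inv_add_nat_sq_eq (x : ℝ) :
    ∑' k : ℕ, ((x + k) ^ 2)⁻¹ = (x ^ 2)⁻¹ + ∑' k : ℕ, ((x + 1 + k) ^ 2)⁻¹ := by
  rw [(summable_inv_add_nat_sq x).tsum_eq_zero_add]
  simp only [Nat.cast_zero, add_zero, Nat.cast_succ, add_assoc, add_comm (1 : ℝ)]

lemma tsum_inv_one_add_nat_sq : ∑' k : ℕ, ((1 + k : ℝ) ^ 2)⁻¹ = π ^ 2 / 6 := by
  have h := (hasSum_nat_add_iff' 1).mpr hasSum_zeta_two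
  simpa [add_comm] using h.tsum_eq

lemma continuousAt_tsum_inv_add_nat_sq {x : ℝ} (hx : 0 < x) :
    ContinuousAt (fun y : ℝ => ∑' k : ℕ, ((y + k) ^ 2)⁻¹) x := by
  have hcont : ContinuousOn (fun y : ℝ => ∑' k : ℕ, ((y + k) ^ 2)⁻¹) (Ioi (x / 2)) := by
    refine continuousOn_tsum (fun k => ?_) (summable_inv_add_nat_sq (x / 2)) fun k y hy => ?_
    · refine ContinuousOn.inv₀ (by fun_prop) fun y (hy : x / 2 < y) => ?_
      have : 0 < y := by linarith
      positivity
    · have : x / 2 + k ≤ y + k := by linarith [mem_Ioi.mp hy]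
      rw [norm_of_nonneg (by positivity)]
      gcongr
  exact hcont.continuousAt (Ioi_mem_nhds (by linarith))

lemma abs_inv_sub_inv_add_le {a y : ℝ} (ha : 0 < a) (hy : 0 ≤ y) :
    |a⁻¹ - (y + a)⁻¹| ≤ y * (a ^ 2)⁻¹ := by
  have hya : 0 < y + a := by linarith
  have hsub : a⁻¹ - (y + a)⁻¹ = y / (a * (y + a)) := by field_simp; ring
  rw [hsub, abs_of_nonneg (by positivity), ← div_eq_mul_inv, sq]
  gcongr
  linarith

lemma hasDerivAt_tsum_inv_sub_inv {x : ℝ} (hx : -1 < x) :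
    HasDerivAt (fun y : ℝ => ∑' k : ℕ, ((k + 1 : ℝ)⁻¹ - (y + (k + 1))⁻¹))
      (∑' k : ℕ, ((x + 1 + k) ^ 2)⁻¹) x := by
  -- `a < 0` because the series is known to converge at `0`, where all its terms vanish.
  obtain ⟨a, ha, hxa, h0a⟩ : ∃ a, -1 < a ∧ a < x ∧ a < 0 :=
    ⟨(min x 0 - 1) / 2, by linarith [lt_min hx (by norm_num : (-1 : ℝ) < 0)],
      by linarith [min_le_left x 0], by linarith [min_le_right x 0]⟩
  have hderiv : ∀ (k : ℕ), ∀ y ∈ Ioi a,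
      HasDerivAt (fun y : ℝ => (k + 1 : ℝ)⁻¹ - (y + (k + 1))⁻¹) (((y + 1 + k) ^ 2)⁻¹) y := by
    intro k y hy
    have hpos : 0 < y + (k + 1) := by linarith [mem_Ioi.mp hy, k.cast_nonneg (α := ℝ)]
    exact ((hasDerivAt_const y _).sub (((hasDerivAt_id y).add_const _).inv hpos.ne')).congr_deriv
      (by simp only [id]; ring)
  have hbound : ∀ (k : ℕ), ∀ y ∈ Ioi a, ‖((y + 1 + k) ^ 2)⁻¹‖ ≤ ((a + 1 + k) ^ 2)⁻¹ := by
    intro k y hy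
    have hpos : 0 < a + 1 + k := by linarith [k.cast_nonneg (α := ℝ)]
    have hle : a + 1 + k ≤ y + 1 + k := by linarith [mem_Ioi.mp hy]
    rw [norm_of_nonneg (by positivity)]
    gcongr
  exact hasDerivAt_tsum_of_isPreconnected (summable_inv_add_nat_sq (a + 1)) isOpen_Ioi
    isPreconnected_Ioi hderiv hbound h0a (by simp) hxa

lemma hasDerivAt_logGammaSeq {y : ℝ} (hy : 0 < y) (n : ℕ) :
    HasDerivAt (BohrMollerup.logGammaSeq · n)
      (log n - ∑ m ∈ Finset.range (n + 1), (y + m)⁻¹) y := by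
  have hsum : HasDerivAt (fun z => ∑ m ∈ Finset.range (n + 1), log (z + m))
      (∑ m ∈ Finset.range (n + 1), (y + m)⁻¹) y :=
    HasDerivAt.fun_sum fun m _ => by
      simpa using ((hasDerivAt_id y).add_const (m : ℝ)).log (by positivity)
  exact ((hasDerivAt_mul_const (log n)).add_const _).sub hsum

lemma tendstoUniformlyOn_log_sub_sum_inv_add (b : ℝ) :
    TendstoUniformlyOn (fun (n : ℕ) (y : ℝ) => log n - ∑ m ∈ Finset.range (n + 1), (y + m)⁻¹)
      (fun y => -eulerMascheroniConstant - y⁻¹ + ∑' k : ℕ, ((k + 1 : ℝ)⁻¹ - (y + (k + 1))⁻¹))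
      atTop (Icc 0 b) := by
  have hseries := tendstoUniformlyOn_tsum_nat ((summable_inv_add_nat_sq 1).mul_left b)
    (s := Icc 0 b) (f := fun (k : ℕ) (y : ℝ) => (k + 1 : ℝ)⁻¹ - (y + (k + 1))⁻¹) fun k y hy => by
      rw [norm_eq_abs, add_comm (1 : ℝ)]
      exact (abs_inv_sub_inv_add_le (by positivity) hy.1).trans (by gcongr; exact hy.2)
  have hconst := tendsto_harmonic_sub_log.neg.tendstoUniformlyOn_const (Icc (0 : ℝ) b)
  have hinv : TendstoUniformlyOn (fun (_ : ℕ) (y : ℝ) => y⁻¹) (·⁻¹) atTop (Icc 0 b) :=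
    Metric.tendstoUniformlyOn_iff.2 fun ε hε => Eventually.of_forall fun _ _ _ => by simpa using hε
  -- `log n - ∑_{m ≤ n} (y + m)⁻¹ = -(H_n - log n) - y⁻¹ + ∑_{k < n} ((k + 1)⁻¹ - (y + (k + 1))⁻¹)`
  refine (((hconst.sub hinv).add hseries).congr (Eventually.of_forall fun n y _ => ?_)).congr_right
    fun y _ => ?_
  · simp only [Pi.add_apply, Pi.sub_apply, Finset.sum_range_succ', harmonic, Finset.sum_sub_distrib]
    push_cast
    ring
  · simp

lemma hasDerivAt_log_Gamma {x : ℝ} (hx : 0 < x) :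
    HasDerivAt (fun t => log (Gamma t))
      (-eulerMascheroniConstant - x⁻¹ + ∑' k : ℕ, ((k + 1 : ℝ)⁻¹ - (x + (k + 1))⁻¹)) x :=
  hasDerivAt_of_tendstoUniformlyOn (f := fun n y => BohrMollerup.logGammaSeq y n) isOpen_Ioo
    ((tendstoUniformlyOn_log_sub_sum_inv_add (x + 1)).mono Ioo_subset_Icc_self)
    (Eventually.of_forall fun n y hy => hasDerivAt_logGammaSeq hy.1 n)
    (fun y hy => BohrMollerup.tendsto_log_gamma hy.1) ⟨hx, by linarith⟩

lemma hasDerivAt_digamma {x : ℝ} (hx : 0 < x) :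
    HasDerivAt digamma (∑' k : ℕ, ((x + k) ^ 2)⁻¹) x := by
  have hdigamma : (fun y => -eulerMascheroniConstant - y⁻¹
      + ∑' k : ℕ, ((k + 1 : ℝ)⁻¹ - (y + (k + 1))⁻¹)) =ᶠ[𝓝 x] digamma :=
    eventually_of_mem (Ioi_mem_nhds hx) fun y hy => (hasDerivAt_log_Gamma hy).deriv.symm
  rw [tsum_inv_add_nat_sq_eq]
  refine HasDerivAt.congr_of_eventuallyEq ?_ hdigamma.symm
  exact (((hasDerivAt_inv hx.ne').const_sub _).add
    (hasDerivAt_tsum_inv_sub_inv (by linarith))).congr_deriv (by ring)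

lemma log_Gamma_eq_log_Gamma_add_one_sub_log {x : ℝ} (hx : -1 < x) (hx0 : x ≠ 0) :
    log (Gamma x) = log (Gamma (x + 1)) - log x := by
  have hG : Gamma (x + 1) ≠ 0 := (Gamma_pos_of_pos (by linarith)).ne'
  rw [Gamma_add_one hx0] at hG ⊢
  rw [log_mul hx0 (right_ne_zero_of_mul hG)]
  ring

lemma digamma_eq_digamma_add_one_sub_inv {x : ℝ} (hx : -1 < x) (hx0 : x ≠ 0) :
    digamma x = digamma (x + 1) - x⁻¹ := by
  have hshift : (fun y => log (Gamma (y + 1)) - log y) =ᶠ[𝓝 x] fun y => log (Gamma y) :=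
    eventually_of_mem ((isOpen_Ioi.inter isOpen_compl_singleton).mem_nhds ⟨hx, hx0⟩)
      fun y hy => (log_Gamma_eq_log_Gamma_add_one_sub_log hy.1 hy.2).symm
  have hderiv := ((hasDerivAt_log_Gamma (by linarith : 0 < x + 1)).differentiableAt.hasDerivAt
    |>.comp_add_const x 1).sub (hasDerivAt_log hx0)
  exact (hderiv.congr_of_eventuallyEq hshift.symm).deriv

lemma deriv_digamma_eq_inv_sq_add_tsum {x : ℝ} (hx : -1 < x) (hx0 : x ≠ 0) :
    deriv digamma x = (x ^ 2)⁻¹ + ∑' k : ℕ, ((x + 1 + k) ^ 2)⁻¹ := by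
  have hshift : (fun y => digamma (y + 1) - y⁻¹) =ᶠ[𝓝 x] digamma :=
    eventually_of_mem ((isOpen_Ioi.inter isOpen_compl_singleton).mem_nhds ⟨hx, hx0⟩)
      fun y hy => (digamma_eq_digamma_add_one_sub_inv hy.1 hy.2).symm
  have hderiv := ((hasDerivAt_digamma (by linarith : 0 < x + 1)).comp_add_const x 1).sub
    (hasDerivAt_inv hx0)
  rw [(hderiv.congr_of_eventuallyEq hshift.symm).deriv]
  ring

lemma tendsto_sub_sin_div_pow_three :
    Tendsto (fun v => (v - sin v) / v ^ 3) (𝓝[≠] 0) (𝓝 (1 / 6)) := by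
  have hbound : ∀ᶠ v in 𝓝[≠] (0 : ℝ), ‖(v - sin v) / v ^ 3 - 1 / 6‖ ≤ v ^ 2 / 100 := by
    filter_upwards [self_mem_nhdsWithin,
      mem_nhdsWithin_of_mem_nhds (Metric.closedBall_mem_nhds (0 : ℝ) one_pos)] with v hv0 hv1
    have hv : v ≠ 0 := hv0
    have hsin := sin_bound (by simpa using hv1)
    rw [show (v - sin v) / v ^ 3 - 1 / 6 = -((sin v - (v - v ^ 3 / 6)) / v ^ 3) by
      field_simp; ring, norm_neg, norm_div, norm_pow, norm_eq_abs, div_le_iff₀ (by positivity)]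
    calc |sin v - (v - v ^ 3 / 6)| ≤ |v| ^ 5 / 100 := hsin
      _ = v ^ 2 / 100 * |v| ^ 3 := by rw [← sq_abs v]; ring
  have hsmall : Tendsto (fun v : ℝ => v ^ 2 / 100) (𝓝[≠] 0) (𝓝 0) :=
    ((continuous_pow 2).div_const 100).tendsto' 0 0 (by simp) |>.mono_left nhdsWithin_le_nhds
  exact tendsto_sub_nhds_zero_iff.mp (squeeze_zero_norm' hbound hsmall)

lemma tendsto_inv_sin_sq_sub_inv_sq :
    Tendsto (fun v => (sin v ^ 2)⁻¹ - (v ^ 2)⁻¹) (𝓝[≠] 0) (𝓝 (1 / 3)) := by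
  have hsinc : Tendsto sinc (𝓝[≠] 0) (𝓝 1) :=
    sinc_zero ▸ continuous_sinc.continuousAt.tendsto.mono_left nhdsWithin_le_nhds
  have hprod := (tendsto_sub_sin_div_pow_three.mul (hsinc.const_add 1)).mul
    ((hsinc.pow 2).inv₀ (by norm_num))
  have hfactor : ∀ᶠ v in 𝓝[≠] (0 : ℝ),
      (v - sin v) / v ^ 3 * (1 + sinc v) * (sinc v ^ 2)⁻¹ = (sin v ^ 2)⁻¹ - (v ^ 2)⁻¹ := by
    filter_upwards [self_mem_nhdsWithin, hsinc.eventually_ne one_ne_zero] with v hv0 hv1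
    have hv : v ≠ 0 := hv0
    rw [sinc_of_ne_zero hv] at hv1 ⊢
    have hsin : sin v ≠ 0 := by rintro h; simp [h] at hv1
    field_simp
    ring
  rw [show (1 / 3 : ℝ) = 1 / 6 * (1 + 1) * (1 ^ 2)⁻¹ by norm_num]
  exact hprod.congr' hfactor

lemma tendsto_sec_sq_sub_inv_sq :
    Tendsto (fun s => π ^ 2 / 4 * (1 / cos (π * s / 2)) ^ 2 - ((1 - s) ^ 2)⁻¹)
      (𝓝[≠] 1) (𝓝 (π ^ 2 / 12)) := by
  have hv : Tendsto (fun s => π * (s - 1) / 2) (𝓝[≠] 1) (𝓝[≠] 0) :=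
    tendsto_nhdsWithin_iff.2 ⟨((by fun_prop : Continuous fun s => π * (s - 1) / 2).tendsto' 1 0
      (by simp)).mono_left nhdsWithin_le_nhds, eventually_nhdsWithin_of_forall fun s hs => by
        simpa [sub_eq_zero, pi_ne_zero] using hs⟩
  rw [show π ^ 2 / 12 = π ^ 2 / 4 * (1 / 3) by ring]
  refine ((tendsto_inv_sin_sq_sub_inv_sq.comp hv).const_mul (π ^ 2 / 4)).congr fun s => ?_
  have hcos : cos (π * s / 2) = -sin (π * (s - 1) / 2) := by
    rw [← cos_add_pi_div_two]; ring_nf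
  rw [Function.comp_apply, hcos, one_div, inv_pow, neg_sq, mul_sub,
    show (π * (s - 1) / 2) ^ 2 = π ^ 2 / 4 * (1 - s) ^ 2 by ring, mul_inv, ← mul_assoc,
    mul_inv_cancel₀ (by positivity), one_mul]

theorem tendsto_trigamma_sec_sq :
    Tendsto (fun s : ℝ => -deriv digamma (1 - s)
        + Real.pi ^ 2 / 4 * (1 / Real.cos (Real.pi * s / 2)) ^ 2)
      (𝓝[≠] 1) (𝓝 (-(Real.pi ^ 2 / 12))) := by
  have hsplit : ∀ᶠ s : ℝ in 𝓝[≠] 1,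
      -∑' k : ℕ, ((1 - s + 1 + k) ^ 2)⁻¹
        + (π ^ 2 / 4 * (1 / cos (π * s / 2)) ^ 2 - ((1 - s) ^ 2)⁻¹)
      = -deriv digamma (1 - s) + π ^ 2 / 4 * (1 / cos (π * s / 2)) ^ 2 := by
    filter_upwards [self_mem_nhdsWithin,
      mem_nhdsWithin_of_mem_nhds (Iio_mem_nhds (by norm_num : (1 : ℝ) < 2))] with s hs1 hs2
    rw [deriv_digamma_eq_inv_sq_add_tsum (by linarith [mem_Iio.mp hs2])
      (sub_ne_zero.mpr (Ne.symm hs1))]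
    ring
  have hseries : Tendsto (fun s : ℝ => ∑' k : ℕ, ((1 - s + 1 + k) ^ 2)⁻¹) (𝓝[≠] 1)
      (𝓝 (π ^ 2 / 6)) := by
    have hshift : Tendsto (fun s : ℝ => 1 - s + 1) (𝓝[≠] 1) (𝓝 1) :=
      ((by fun_prop : Continuous fun s : ℝ => 1 - s + 1).tendsto' 1 1 (by norm_num)).mono_left
        nhdsWithin_le_nhds
    rw [← tsum_inv_one_add_nat_sq]
    exact (continuousAt_tsum_inv_add_nat_sq one_pos).tendsto.comp hshift
  rw [show -(π ^ 2 / 12) = -(π ^ 2 / 6) + π ^ 2 / 12 by ring]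
  exact (hseries.neg.add tendsto_sec_sq_sub_inv_sq).congr' hsplit
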